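/- arXiv:1308.4607 — 6 statements merged into one kernel-verified Lean document; each statement's English description precedes it below -/
import Mathlib

section
/- A reflexive binary relation α on a lattice L is a congruence relation if and only if the following three properties hold for all x, y, z, t ∈ L: (i) x ≡ y (mod α) iff x ∧ y ≡ x ∨ y (mod α); (ii) if x ≤ y ≤ z, x ≡ y (mod α), and y ≡ z (mod α), then x ≡ z (mod α); (iii) if x ≤ y and x ≡ y (mod α), then x ∨ t ≡ y ∨ t (mod α) and x ∧ t ≡ y ∧ t (mod α). -/
def IsLatCong {L : Type*} [Lattice L] (α : L → L → Prop) : Prop :=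
  Equivalence α ∧
    ∀ a b c d : L, α a b → α c d → α (a ⊓ c) (b ⊓ d) ∧ α (a ⊔ c) (b ⊔ d)

def ClassesAreIntervals {L : Type*} [Lattice L] (δ : L → L → Prop) : Prop :=
  ∀ a : L, ∃ u v : L, {x : L | δ x a} = Set.Icc u v

def CondJoin {L : Type*} [Lattice L] (δ : L → L → Prop) : Prop :=
  ∀ x y z : L, x ⋖ y → x ⋖ z → δ x y → δ z (y ⊔ z)

def CondMeet {L : Type*} [Lattice L] (δ : L → L → Prop) : Prop :=
  ∀ x y z : L, y ⋖ x → z ⋖ x → δ x y → δ z (y ⊓ z)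

theorem stmt0 {L : Type*} [Lattice L] (α : L → L → Prop)
    (hrefl : ∀ x : L, α x x) :
    IsLatCong α ↔
      ((∀ x y : L, α x y ↔ α (x ⊓ y) (x ⊔ y)) ∧
       (∀ x y z : L, x ≤ y → y ≤ z → α x y → α y z → α x z) ∧
       (∀ x y t : L, x ≤ y → α x y → α (x ⊔ t) (y ⊔ t) ∧ α (x ⊓ t) (y ⊓ t))) := by
  constructor
  · rintro ⟨⟨_, hsymm, htrans⟩, hcomp⟩
    refine ⟨?_, fun x y z _ _ h1 h2 => htrans h1 h2, fun x y t _ h =>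
      ⟨(hcomp _ _ _ _ h (hrefl t)).2, (hcomp _ _ _ _ h (hrefl t)).1⟩⟩
    intro x y
    constructor
    · intro h
      have h1 : α (x ⊓ y) y := by
        have := (hcomp _ _ _ _ h (hrefl y)).1
        simpa using this
      have h2 : α y (x ⊔ y) := by
        have := (hcomp _ _ _ _ (hsymm h) (hrefl y)).2
        simpa [sup_comm] using this
      exact htrans h1 h2
    · intro h
      have h1 : α x (x ⊔ y) := by
        have := (hcomp _ _ _ _ h (hrefl x)).2
        simpa [sup_comm, sup_assoc, sup_left_comm] using this
      have h2 : α y (x ⊔ y) := by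
        have := (hcomp _ _ _ _ h (hrefl y)).2
        simpa [sup_comm, sup_assoc, sup_left_comm, sup_left_idem] using this
      exact htrans h1 (hsymm h2)
  · rintro ⟨C1, C2, C3⟩
    -- symmetry
    have hsymm : ∀ {x y : L}, α x y → α y x := by
      intro x y h
      rw [C1] at h ⊢
      rwa [inf_comm, sup_comm] at h
    -- interval restriction: a ≤ b ≤ c ≤ d, α a d → α b c
    have hres : ∀ {a b c d : L}, a ≤ b → b ≤ c → c ≤ d → α a d → α b c := by
      intro a b c d hab hbc hcd h
      have h1 : α b d := by
        have := (C3 a d b (hab.trans (hbc.trans hcd)) h).1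
        rwa [sup_eq_right.2 hab, sup_eq_left.2 (hbc.trans hcd)] at this
      have h2 := (C3 b d c (hbc.trans hcd) h1).2
      rwa [inf_eq_left.2 hbc, inf_eq_right.2 hcd] at h2
    -- transitivity
    have htrans : ∀ {x y z : L}, α x y → α y z → α x z := by
      intro x y z hxy hyz
      rw [C1] at hxy hyz
      have hxy1 : α (x ⊓ y) y := hres le_rfl inf_le_right le_sup_right hxy
      have hxy2 : α y (x ⊔ y) := hres inf_le_right le_sup_right le_rfl hxy
      have hyz1 : α (y ⊓ z) y := hres le_rfl inf_le_left le_sup_left hyz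
      have hyz2 : α y (y ⊔ z) := hres inf_le_left le_sup_left le_rfl hyz
      -- lower chain: x⊓y⊓z ≤ y⊓z ≤ y
      have hlow : α (x ⊓ y ⊓ z) y := by
        have h1 := (C3 (x ⊓ y) y (y ⊓ z) inf_le_right hxy1).2
        have e1 : x ⊓ y ⊓ (y ⊓ z) = x ⊓ y ⊓ z := by simp [inf_assoc]
        have e2 : y ⊓ (y ⊓ z) = y ⊓ z := by simp
        rw [e1, e2] at h1
        exact C2 _ _ _ (inf_le_inf_right z inf_le_right) inf_le_left h1 hyz1
      -- upper chain: y ≤ y⊔z ≤ x⊔y⊔z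
      have hup : α y (x ⊔ y ⊔ z) := by
        have h1 := (C3 y (x ⊔ y) (y ⊔ z) le_sup_right hxy2).1
        have e1 : y ⊔ (y ⊔ z) = y ⊔ z := by simp
        have e2 : x ⊔ y ⊔ (y ⊔ z) = x ⊔ y ⊔ z := by simp [sup_assoc]
        rw [e1, e2] at h1
        exact C2 _ _ _ le_sup_left (sup_le_sup_right le_sup_right z) hyz2 h1
      have hbig : α (x ⊓ y ⊓ z) (x ⊔ y ⊔ z) :=
        C2 _ _ _ (inf_le_left.trans inf_le_right)
          (le_sup_right.trans le_sup_left) hlow hup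
      rw [C1]
      exact hres (le_inf (inf_le_left.trans inf_le_left) inf_le_right)
        inf_le_sup (sup_le (le_sup_left.trans le_sup_left) le_sup_right) hbig
    -- one-sided compatibility
    have hmeet : ∀ (a b t : L), α a b → α (a ⊓ t) (b ⊓ t) := by
      intro a b t h
      rw [C1] at h
      have h1 := (C3 (a ⊓ b) (a ⊔ b) t inf_le_sup h).2
      have ha : α (a ⊓ t) ((a ⊔ b) ⊓ t) :=
        hres (inf_le_inf_right t inf_le_left) (inf_le_inf_right t le_sup_left) le_rfl h1
      have hb : α (b ⊓ t) ((a ⊔ b) ⊓ t) :=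
        hres (inf_le_inf_right t inf_le_right) (inf_le_inf_right t le_sup_right) le_rfl h1
      exact htrans ha (hsymm hb)
    have hjoin : ∀ (a b t : L), α a b → α (a ⊔ t) (b ⊔ t) := by
      intro a b t h
      rw [C1] at h
      have h1 := (C3 (a ⊓ b) (a ⊔ b) t inf_le_sup h).1
      have ha : α (a ⊔ t) ((a ⊔ b) ⊔ t) :=
        hres (sup_le_sup_right inf_le_left t) (sup_le_sup_right le_sup_left t) le_rfl h1
      have hb : α (b ⊔ t) ((a ⊔ b) ⊔ t) :=
        hres (sup_le_sup_right inf_le_right t) (sup_le_sup_right le_sup_right t) le_rfl h1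
      exact htrans ha (hsymm hb)
    refine ⟨⟨hrefl, fun h => hsymm h, fun h1 h2 => htrans h1 h2⟩, ?_⟩
    intro a b c d hab hcd
    constructor
    · have h1 : α (a ⊓ c) (b ⊓ c) := hmeet a b c hab
      have h2 : α (b ⊓ c) (b ⊓ d) := by
        have := hmeet c d b hcd
        rwa [inf_comm c b, inf_comm d b] at this
      exact htrans h1 h2
    · have h1 : α (a ⊔ c) (b ⊔ c) := hjoin a b c hab
      have h2 : α (b ⊔ c) (b ⊔ d) := by
        have := hjoin c d b hcd
        rwa [sup_comm c b, sup_comm d b] at this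
      exact htrans h1 h2
end

section
/- Let L be a finite lattice and let δ be an equivalence relation on L each of whose equivalence classes is an interval of L. Then δ is a congruence relation if and only if the following condition and its dual hold: (C∨) whenever x is covered by both y and z in L and x ≡ y (mod δ), then z ≡ y ∨ z (mod δ); (C∧) whenever x covers both y and z in L and x ≡ y (mod δ), then z ≡ y ∧ z (mod δ). -/
section Aux

variable {L : Type*} [Lattice L] (δ : L → L → Prop)

/-- Convexity of classes. -/
lemma conv_mem (hint : ClassesAreIntervals δ) {a x y z : L}
    (hx : δ x a) (hy : δ y a) (hxz : x ≤ z) (hzy : z ≤ y) : δ z a := by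
  obtain ⟨u, v, h⟩ := hint a
  have hx' : x ∈ Set.Icc u v := h ▸ hx
  have hy' : y ∈ Set.Icc u v := h ▸ hy
  have hz : z ∈ Set.Icc u v := ⟨hx'.1.trans hxz, hzy.trans hy'.2⟩
  exact (Set.ext_iff.mp h z).mpr hz

lemma class_sup_inf (hequiv : Equivalence δ) (hint : ClassesAreIntervals δ)
    {a b : L} (hd : δ a b) : δ a (a ⊔ b) ∧ δ a (a ⊓ b) := by
  obtain ⟨u, v, h⟩ := hint a
  have ha : a ∈ Set.Icc u v := h ▸ (hequiv.refl a)
  have hb : b ∈ Set.Icc u v := h ▸ (hequiv.symm hd)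
  have h1 : a ⊔ b ∈ Set.Icc u v := ⟨ha.1.trans le_sup_left, sup_le ha.2 hb.2⟩
  have h2 : a ⊓ b ∈ Set.Icc u v := ⟨le_inf ha.1 hb.1, inf_le_left.trans ha.2⟩
  exact ⟨hequiv.symm ((Set.ext_iff.mp h _).mpr h1),
    hequiv.symm ((Set.ext_iff.mp h _).mpr h2)⟩

variable [Fintype L]

/-- The key technical lemma: if `δ a b` with `a ≤ b` and `a ≤ t`, then `δ t (b ⊔ t)`. -/
lemma key (hequiv : Equivalence δ) (hint : ClassesAreIntervals δ) (hj : CondJoin δ) :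
    ∀ n (a b t : L), (Set.Icc (b ⊓ t) (b ⊔ t)).ncard ≤ n → a ≤ b → δ a b → a ≤ t →
      δ t (b ⊔ t) := by
  intro n
  induction n with
  | zero =>
    intro a b t hcard _ _ _
    exfalso
    have hmem : b ⊓ t ∈ Set.Icc (b ⊓ t) (b ⊔ t) := ⟨le_rfl, inf_le_left.trans le_sup_left⟩
    have := (Set.ncard_pos (Set.toFinite _)).mpr ⟨_, hmem⟩
    omega
  | succ n ih =>
    intro a b t hcard hab hd hat
    by_cases hbt : b ≤ t
    · rw [sup_eq_right.mpr hbt]; exact hequiv.refl t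
    by_cases htb : t ≤ b
    · rw [sup_eq_left.mpr htb]
      exact conv_mem δ hint hd (hequiv.refl b) hat htb
    have hd' : δ (b ⊓ t) b :=
      conv_mem δ hint hd (hequiv.refl b) (le_inf hab hat) inf_le_left
    have h1 : b ⊓ t < b := lt_of_le_of_ne inf_le_left (fun h => hbt (h ▸ inf_le_right))
    have h2 : b ⊓ t < t := lt_of_le_of_ne inf_le_right (fun h => htb (h ▸ inf_le_left))
    obtain ⟨e, hce, heb⟩ := exists_covBy_le_of_lt h1
    obtain ⟨s, hcs, hst⟩ := exists_covBy_le_of_lt h2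
    have heB : δ e b := conv_mem δ hint hd' (hequiv.refl b) hce.le heb
    have hde : δ (b ⊓ t) e := hequiv.trans hd' (hequiv.symm heB)
    have hC : δ s (e ⊔ s) := hj (b ⊓ t) e s hce hcs hde
    have hetop : (e ⊔ s) ⊔ t = e ⊔ t := by
      rw [sup_assoc, sup_eq_right.mpr hst]
    have hbet : b ⊔ (e ⊔ t) = b ⊔ t := by
      rw [← sup_assoc, sup_eq_left.mpr heb]
    -- first recursive call
    have card1 : (Set.Icc ((e ⊔ s) ⊓ t) ((e ⊔ s) ⊔ t)).ncard ≤ n := by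
      have hsub : Set.Icc ((e ⊔ s) ⊓ t) ((e ⊔ s) ⊔ t) ⊂ Set.Icc (b ⊓ t) (b ⊔ t) := by
        constructor
        · apply Set.Icc_subset_Icc
          · exact le_inf (hcs.le.trans le_sup_right) inf_le_right
          · exact sup_le (sup_le (heb.trans le_sup_left) (hst.trans le_sup_right)) le_sup_right
        · intro hsub'
          have : b ⊓ t ∈ Set.Icc ((e ⊔ s) ⊓ t) ((e ⊔ s) ⊔ t) :=
            hsub' ⟨le_rfl, inf_le_left.trans le_sup_left⟩
          have hs : s ≤ b ⊓ t := (le_inf le_sup_right hst).trans this.1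
          exact absurd hs (not_le_of_gt hcs.lt)
      have := Set.ncard_lt_ncard hsub (Set.toFinite _)
      omega
    have hr1 : δ t ((e ⊔ s) ⊔ t) := ih s (e ⊔ s) t card1 le_sup_right hC hst
    rw [hetop] at hr1
    -- second recursive call
    have card2 : (Set.Icc (b ⊓ (e ⊔ t)) (b ⊔ (e ⊔ t))).ncard ≤ n := by
      have hsub : Set.Icc (b ⊓ (e ⊔ t)) (b ⊔ (e ⊔ t)) ⊂ Set.Icc (b ⊓ t) (b ⊔ t) := by
        constructor
        · rw [hbet]
          exact Set.Icc_subset_Icc (le_inf inf_le_left (inf_le_right.trans le_sup_right)) le_rfl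
        · intro hsub'
          have : b ⊓ t ∈ Set.Icc (b ⊓ (e ⊔ t)) (b ⊔ (e ⊔ t)) :=
            hsub' ⟨le_rfl, inf_le_left.trans le_sup_left⟩
          have he : e ≤ b ⊓ t := (le_inf heb le_sup_left).trans this.1
          exact absurd he (not_le_of_gt hce.lt)
      have := Set.ncard_lt_ncard hsub (Set.toFinite _)
      omega
    have hr2 : δ (e ⊔ t) (b ⊔ (e ⊔ t)) := ih e b (e ⊔ t) card2 heb heB le_sup_left
    rw [hbet] at hr2
    exact hequiv.trans hr1 hr2

lemma keyT (hequiv : Equivalence δ) (hint : ClassesAreIntervals δ) (hj : CondJoin δ)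
    {a b : L} (hab : a ≤ b) (hd : δ a b) (c : L) : δ (a ⊔ c) (b ⊔ c) := by
  have h := key δ hequiv hint hj _ a b (a ⊔ c) le_rfl hab hd le_sup_left
  have : b ⊔ (a ⊔ c) = b ⊔ c := by rw [← sup_assoc, sup_eq_left.mpr hab]
  rwa [this] at h

lemma keyM (hequiv : Equivalence δ) (hint : ClassesAreIntervals δ) (hm : CondMeet δ)
    {a b : L} (hab : b ≤ a) (hd : δ a b) (c : L) : δ (a ⊓ c) (b ⊓ c) := by
  let δ' : Lᵒᵈ → Lᵒᵈ → Prop := fun x y => δ (OrderDual.ofDual x) (OrderDual.ofDual y)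
  have hequiv' : Equivalence δ' :=
    ⟨fun x => hequiv.refl _, fun h => hequiv.symm h, fun h1 h2 => hequiv.trans h1 h2⟩
  have hint' : ClassesAreIntervals δ' := by
    intro x
    obtain ⟨u, v, h⟩ := hint (OrderDual.ofDual x)
    refine ⟨OrderDual.toDual v, OrderDual.toDual u, ?_⟩
    ext y
    exact (Set.ext_iff.mp h (OrderDual.ofDual y)).trans
      ⟨fun hh => ⟨hh.2, hh.1⟩, fun hh => ⟨hh.2, hh.1⟩⟩
  have hj' : CondJoin δ' := by
    intro x y z hxy hxz hd1
    exact hm (OrderDual.ofDual x) (OrderDual.ofDual y) (OrderDual.ofDual z)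
      hxy.ofDual hxz.ofDual hd1
  exact keyT δ' hequiv' hint' hj' (a := OrderDual.toDual a) (b := OrderDual.toDual b)
    hab hd (OrderDual.toDual c)

end Aux

theorem stmt1 {L : Type*} [Lattice L] [Fintype L] (δ : L → L → Prop)
    (hequiv : Equivalence δ) (hint : ClassesAreIntervals δ) :
    IsLatCong δ ↔ (CondJoin δ ∧ CondMeet δ) := by
  constructor
  · rintro ⟨heq, hcomp⟩
    constructor
    · intro x y z hxy hxz hd
      have h := (hcomp x y z z hd (heq.refl z)).2
      rwa [sup_eq_right.mpr hxz.le] at h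
    · intro x y z hxy hxz hd
      have h := (hcomp x y z z hd (heq.refl z)).1
      rwa [inf_eq_right.mpr hxz.le] at h
  · rintro ⟨hj, hm⟩
    refine ⟨hequiv, fun a b c d h1 h2 => ⟨?_, ?_⟩⟩
    · -- meets
      set m := a ⊓ b with hmdef
      set p := c ⊓ d with hpdef
      have ham : δ a m := (class_sup_inf δ hequiv hint h1).2
      have hbm : δ b m := by
        have := (class_sup_inf δ hequiv hint (hequiv.symm h1)).2
        rwa [inf_comm b a] at this
      have hcp : δ c p := (class_sup_inf δ hequiv hint h2).2
      have hdp : δ d p := by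
        have := (class_sup_inf δ hequiv hint (hequiv.symm h2)).2
        rwa [inf_comm d c] at this
      have k1 : δ (a ⊓ c) (m ⊓ c) := keyM δ hequiv hint hm inf_le_left ham c
      have k2 : δ (c ⊓ m) (p ⊓ m) := keyM δ hequiv hint hm inf_le_left hcp m
      have k3 : δ (b ⊓ d) (m ⊓ d) := keyM δ hequiv hint hm inf_le_right hbm d
      have k4 : δ (d ⊓ m) (p ⊓ m) := keyM δ hequiv hint hm inf_le_right hdp m
      rw [inf_comm c m] at k2
      rw [inf_comm d m] at k4
      exact hequiv.trans (hequiv.trans k1 k2)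
        (hequiv.symm (hequiv.trans k3 k4))
    · -- joins
      set u := a ⊔ b with hudef
      set v := c ⊔ d with hvdef
      have hau : δ a u := (class_sup_inf δ hequiv hint h1).1
      have hbu : δ b u := by
        have := (class_sup_inf δ hequiv hint (hequiv.symm h1)).1
        rwa [sup_comm b a] at this
      have hcv : δ c v := (class_sup_inf δ hequiv hint h2).1
      have hdv : δ d v := by
        have := (class_sup_inf δ hequiv hint (hequiv.symm h2)).1
        rwa [sup_comm d c] at this
      have k1 : δ (a ⊔ c) (u ⊔ c) := keyT δ hequiv hint hj le_sup_left hau c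
      have k2 : δ (c ⊔ u) (v ⊔ u) := keyT δ hequiv hint hj le_sup_left hcv u
      have k3 : δ (b ⊔ d) (u ⊔ d) := keyT δ hequiv hint hj le_sup_right hbu d
      have k4 : δ (d ⊔ u) (v ⊔ u) := keyT δ hequiv hint hj le_sup_right hdv u
      rw [sup_comm c u] at k2
      rw [sup_comm d u] at k4
      exact hequiv.trans (hequiv.trans k1 k2)
        (hequiv.symm (hequiv.trans k3 k4))
end

section
/- Let L be a finite lattice and let δ be an equivalence relation on L whose classes are intervals, satisfying condition (C∨): if x is covered by y and z and x ≡ y (mod δ), then z ≡ y ∨ z (mod δ). Then δ satisfies the join-substitution property: for all x ≤ y with x ≡ y (mod δ) and all z ∈ L, x ∨ z ≡ y ∨ z (mod δ). -/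
theorem stmt2 {L : Type*} [Lattice L] [Fintype L] (δ : L → L → Prop)
    (hequiv : Equivalence δ) (hint : ClassesAreIntervals δ)
    (hC : CondJoin δ) :
    ∀ x y z : L, x ≤ y → δ x y → δ (x ⊔ z) (y ⊔ z) := by
  -- interval property: x ≤ t ≤ y, δ x y → δ x t
  have hmid : ∀ x t y : L, x ≤ t → t ≤ y → δ x y → δ x t := by
    intro x t y hxt hty hxy
    obtain ⟨u, v, huv⟩ := hint x
    have hx : x ∈ Set.Icc u v := huv ▸ (show δ x x from hequiv.refl x)
    have hy : y ∈ Set.Icc u v := huv ▸ (show δ y x from hequiv.symm hxy)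
    have ht : t ∈ {z : L | δ z x} := by
      rw [huv]; exact ⟨hx.1.trans hxt, hty.trans hy.2⟩
    exact hequiv.symm ht
  -- main claim by well-founded induction on x (upwards)
  have key : ∀ x : L, ∀ y w : L, x ≤ y → δ x y → x ≤ w → δ w (y ⊔ w) := by
    intro x
    induction x using WellFoundedGT.induction with
    | _ x IH =>
      intro y w hxy hδ hxw
      rcases eq_or_lt_of_le hxy with rfl | hxy'
      · rw [sup_eq_right.2 hxw]; exact hequiv.refl w
      obtain ⟨s, hxs, hsy⟩ := hxy'.exists_covby_le
      have hδxs : δ x s := hmid x s y hxs.le hsy hδ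
      -- step 1 : δ w (s ⊔ w)
      have step1 : δ w (s ⊔ w) := by
        rcases eq_or_lt_of_le hxw with rfl | hxw'
        · rw [sup_eq_left.2 hxs.le] at *
          exact hδxs
        obtain ⟨t, hxt, htw⟩ := hxw'.exists_covby_le
        rcases eq_or_ne t s with rfl | hts
        · rw [sup_eq_right.2 htw]; exact hequiv.refl w
        · have h1 : δ t (s ⊔ t) := hC x s t hxs hxt hδxs
          have h2 := IH t hxt.lt (s ⊔ t) w le_sup_right h1 htw
          rwa [sup_assoc, sup_eq_right.2 htw] at h2
      -- step 2 : δ (s ⊔ w) (y ⊔ w)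
      have step2 : δ (s ⊔ w) (y ⊔ (s ⊔ w)) :=
        IH s hxs.lt y (s ⊔ w) hsy (hequiv.trans (hequiv.symm hδxs) hδ) le_sup_left
      have heq : y ⊔ (s ⊔ w) = y ⊔ w := by
        rw [← sup_assoc, sup_eq_left.2 hsy]
      rw [heq] at step2
      exact hequiv.trans step1 step2
  intro x y z hxy hδ
  have h := key x y (x ⊔ z) hxy hδ le_sup_left
  rwa [← sup_assoc, sup_eq_left.2 hxy] at h
end

section
/- Let L be a lattice in which every interval has finite length, and let δ be an equivalence relation on L whose classes are intervals. Then δ is a congruence relation if and only if condition (C∨) and its dual (C∧) hold. -/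
namespace Stmt6Aux
variable {L : Type*} [Lattice L]

def FinLen (L : Type*) [Lattice L] : Prop :=
  ∀ a b : L, a ≤ b → ∃ n : ℕ, ∀ (m : ℕ) (f : Fin m → L),
      StrictMono f → (∀ i, f i ∈ Set.Icc a b) → m ≤ n + 1

noncomputable def len (a b : L) : ℕ :=
  sInf {n | ∀ (m : ℕ) (f : Fin m → L), StrictMono f → (∀ i, f i ∈ Set.Icc a b) → m ≤ n + 1}

lemma len_spec (hfin : FinLen L) {a b : L} (hab : a ≤ b) :
    ∀ (m : ℕ) (f : Fin m → L), StrictMono f → (∀ i, f i ∈ Set.Icc a b) → m ≤ len a b + 1 :=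
  Nat.sInf_mem (hfin a b hab)

lemma len_mono (hfin : FinLen L) {a b a' b' : L} (hab : a ≤ b) (h1 : a ≤ a') (h2 : b' ≤ b) :
    len a' b' ≤ len a b :=
  Nat.sInf_le (fun m f hf hi =>
    len_spec hfin hab m f hf (fun i => ⟨h1.trans (hi i).1, (hi i).2.trans h2⟩))

lemma cons_strictMono {m : ℕ} {a : L} {f : Fin m → L} (hf : StrictMono f)
    (ha : ∀ i, a < f i) : StrictMono (Fin.cases a f : Fin (m+1) → L) := by
  intro i j hij
  induction i using Fin.cases with
  | zero =>
    induction j using Fin.cases with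
    | zero => exact absurd hij (lt_irrefl _)
    | succ j => simpa using ha j
  | succ i =>
    induction j using Fin.cases with
    | zero => exact absurd hij (by simp [Fin.lt_def])
    | succ j => simpa using hf (Fin.succ_lt_succ_iff.mp hij)

lemma snoc_strictMono {m : ℕ} {b : L} {f : Fin m → L} (hf : StrictMono f)
    (hb : ∀ i, f i < b) : StrictMono (Fin.snoc f b : Fin (m+1) → L) := by
  intro i j hij
  induction j using Fin.lastCases with
  | last =>
    induction i using Fin.lastCases with
    | last => exact absurd hij (lt_irrefl _)
    | cast i => simpa using hb i
  | cast j =>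
    induction i using Fin.lastCases with
    | last => exact absurd hij (by simp [Fin.lt_def])
    | cast i => simpa using hf (by exact_mod_cast hij)

lemma len_pos (hfin : FinLen L) {a b : L} (h : a < b) : 1 ≤ len a b := by
  have := len_spec hfin h.le 2 (fun i => if i = 0 then a else b) ?_ ?_
  · omega
  · intro i j hij
    fin_cases i <;> fin_cases j <;> simp_all
  · intro i; fin_cases i <;> simp [le_of_lt h, h.le]

lemma len_strict (hfin : FinLen L) {a a' b : L} (h1 : a < a') (h2 : a' ≤ b) :
    len a' b < len a b := by
  have hab : a ≤ b := h1.le.trans h2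
  have hpos : 1 ≤ len a b := len_pos hfin (lt_of_lt_of_le h1 h2)
  have hle : len a' b ≤ len a b - 1 := by
    apply Nat.sInf_le
    intro m f hf hi
    have hmono : StrictMono (Fin.cases a f : Fin (m+1) → L) :=
      cons_strictMono hf (fun i => lt_of_lt_of_le h1 (hi i).1)
    have hmem : ∀ i : Fin (m+1), (Fin.cases a f : Fin (m+1) → L) i ∈ Set.Icc a b := by
      intro i
      induction i using Fin.cases with
      | zero => exact ⟨le_rfl, hab⟩
      | succ i => exact ⟨(h1.le.trans (hi i).1 : a ≤ f i), (hi i).2⟩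
    have := len_spec hfin hab (m+1) _ hmono hmem
    omega
  omega

lemma len_strict_top (hfin : FinLen L) {a b' b : L} (h1 : b' < b) (h2 : a ≤ b') :
    len a b' < len a b := by
  have hab : a ≤ b := h2.trans h1.le
  have hpos : 1 ≤ len a b := len_pos hfin (lt_of_le_of_lt h2 h1)
  have hle : len a b' ≤ len a b - 1 := by
    apply Nat.sInf_le
    intro m f hf hi
    have hmono : StrictMono (Fin.snoc f b : Fin (m+1) → L) :=
      snoc_strictMono hf (fun i => lt_of_le_of_lt (hi i).2 h1)
    have hmem : ∀ i : Fin (m+1), (Fin.snoc f b : Fin (m+1) → L) i ∈ Set.Icc a b := by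
      intro i
      induction i using Fin.lastCases with
      | last =>
        simp only [Fin.snoc_last]
        exact ⟨hab, le_rfl⟩
      | cast i =>
        simp only [Fin.snoc_castSucc]
        exact ⟨(hi i).1, (hi i).2.trans h1.le⟩
    have := len_spec hfin hab (m+1) _ hmono hmem
    omega
  omega

lemma exists_cover_below (hfin : FinLen L) {a c : L} (h : a < c) :
    ∃ c', a ≤ c' ∧ c' ⋖ c := by
  by_contra hno
  push_neg at hno
  have claim : ∀ s : {x : L // a ≤ x ∧ x < c}, ∃ t : {x : L // a ≤ x ∧ x < c}, s.1 < t.1 := by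
    rintro ⟨s, hs1, hs2⟩
    obtain ⟨t, ht1, ht2⟩ := exists_lt_lt_of_not_covBy hs2 (hno s hs1)
    exact ⟨⟨t, hs1.trans ht1.le, ht2⟩, ht1⟩
  choose F hF using claim
  set g : ℕ → {x : L // a ≤ x ∧ x < c} := fun n => F^[n] ⟨a, le_rfl, h⟩ with hg
  have hgm : StrictMono (fun n => (g n).1) := by
    apply strictMono_nat_of_lt_succ
    intro n
    have : g (n+1) = F (g n) := Function.iterate_succ_apply' F n _
    rw [this]; exact hF (g n)
  have := len_spec hfin h.le (len a c + 2) (fun i => (g i.val).1)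
    (fun i j hij => hgm (by exact_mod_cast hij))
    (fun i => ⟨(g i.val).2.1, (g i.val).2.2.le⟩)
  omega

lemma exists_cover_above (hfin : FinLen L) {x y : L} (h : x < y) :
    ∃ y', x ⋖ y' ∧ y' ≤ y := by
  by_contra hno
  push_neg at hno
  have claim : ∀ s : {t : L // x < t ∧ t ≤ y}, ∃ t : {t : L // x < t ∧ t ≤ y}, t.1 < s.1 := by
    rintro ⟨s, hs1, hs2⟩
    have hnc : ¬ x ⋖ s := by
      intro hc
      exact absurd hs2 (by simpa using hno s hc)
    obtain ⟨t, ht1, ht2⟩ := exists_lt_lt_of_not_covBy hs1 hnc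
    exact ⟨⟨t, ht1, ht2.le.trans hs2⟩, ht2⟩
  choose F hF using claim
  set g : ℕ → {t : L // x < t ∧ t ≤ y} := fun n => F^[n] ⟨y, h, le_rfl⟩ with hg
  have hga : StrictAnti (fun n => (g n).1) := by
    apply strictAnti_nat_of_succ_lt
    intro n
    have : g (n+1) = F (g n) := Function.iterate_succ_apply' F n _
    rw [this]; exact hF (g n)
  set N := len x y + 2 with hN
  have := len_spec hfin h.le N (fun i => (g (N - 1 - i.val)).1)
    (fun i j hij => hga (by omega))
    (fun i => ⟨(g _).2.1.le, (g _).2.2⟩)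
  omega

variable {δ : L → L → Prop}

variable {δ : L → L → Prop}

lemma convex (hequiv : Equivalence δ)
    (hint : ∀ a : L, ∃ u v : L, {x : L | δ x a} = Set.Icc u v)
    {a b x : L} (h : δ a b) (h1 : a ≤ x) (h2 : x ≤ b) : δ a x := by
  obtain ⟨u, v, hs⟩ := hint a
  have ha : a ∈ {x : L | δ x a} := hequiv.refl a
  have hb : b ∈ {x : L | δ x a} := hequiv.symm h
  rw [hs] at ha hb
  have hx : x ∈ Set.Icc u v := ⟨ha.1.trans h1, h2.trans hb.2⟩
  rw [← hs] at hx
  exact hequiv.symm hx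

lemma inf_sup_rel (hequiv : Equivalence δ)
    (hint : ∀ a : L, ∃ u v : L, {x : L | δ x a} = Set.Icc u v)
    {a b : L} (h : δ a b) : δ (a ⊓ b) (a ⊔ b) := by
  obtain ⟨u, v, hs⟩ := hint a
  have ha : a ∈ {x : L | δ x a} := hequiv.refl a
  have hb : b ∈ {x : L | δ x a} := hequiv.symm h
  rw [hs] at ha hb
  have h1 : a ⊓ b ∈ Set.Icc u v := ⟨le_inf ha.1 hb.1, inf_le_left.trans ha.2⟩
  have h2 : a ⊔ b ∈ Set.Icc u v := ⟨ha.1.trans le_sup_left, sup_le ha.2 hb.2⟩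
  rw [← hs] at h1 h2
  exact hequiv.trans h1 (hequiv.symm h2)

lemma joinSide (hfin : FinLen L) (hequiv : Equivalence δ)
    (hint : ∀ a : L, ∃ u v : L, {x : L | δ x a} = Set.Icc u v)
    (hJ : ∀ x y z : L, x ⋖ y → x ⋖ z → δ x y → δ z (y ⊔ z)) :
    ∀ a b c : L, δ a b → δ (a ⊔ c) (b ⊔ c) := by
  have key : ∀ n : ℕ,
      (∀ x y z : L, x ⋖ z → x ≤ y → δ x y → len x (y ⊔ z) ≤ n → δ z (y ⊔ z)) ∧
      (∀ a b c : L, a ≤ b → δ a b → a ≤ c → len a (b ⊔ c) ≤ n → δ c (b ⊔ c)) := by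
    intro n
    induction n using Nat.strong_induction_on with
    | _ n IH =>
    have hA : ∀ x y z : L, x ⋖ z → x ≤ y → δ x y → len x (y ⊔ z) ≤ n → δ z (y ⊔ z) := by
      intro x y z hxz hxy hδ hlen
      rcases eq_or_lt_of_le hxy with rfl | hlt
      · rw [sup_eq_right.mpr hxz.le]
        exact hequiv.refl z
      · obtain ⟨y', hxy', hy'y⟩ := exists_cover_above hfin hlt
        have hδxy' : δ x y' := convex hequiv hint hδ hxy'.lt.le hy'y
        have h1 : δ z (y' ⊔ z) := hJ x y' z hxy' hxz hδxy'
        have hy'yz : y' ≤ y ⊔ z := hy'y.trans le_sup_left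
        have hm : len y' (y ⊔ z) < n :=
          lt_of_lt_of_le (len_strict hfin hxy'.lt hy'yz) hlen
        have hδy'y : δ y' y := hequiv.trans (hequiv.symm hδxy') hδ
        have heq : y ⊔ (y' ⊔ z) = y ⊔ z := by
          rw [← sup_assoc, sup_eq_left.mpr hy'y]
        have h2 := (IH _ hm).2 y' y (y' ⊔ z) hy'y hδy'y le_sup_left
          (by rw [heq])
        rw [heq] at h2
        exact hequiv.trans h1 h2
    have hB : ∀ k, ∀ a b c : L, a ≤ b → δ a b → a ≤ c →
        len a (b ⊔ c) ≤ n → len a c ≤ k → δ c (b ⊔ c) := by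
      intro k
      induction k with
      | zero =>
        intro a b c hab hδ hac hlen hk
        rcases eq_or_lt_of_le hac with rfl | hlt
        · rw [sup_eq_left.mpr hab]; exact hδ
        · exact absurd hk (by have := len_pos hfin hlt; omega)
      | succ k IHk =>
        intro a b c hab hδ hac hlen hk
        rcases eq_or_lt_of_le hac with rfl | hlt
        · rw [sup_eq_left.mpr hab]; exact hδ
        · obtain ⟨c', hac', hc'c⟩ := exists_cover_below hfin hlt
          have habc : a ≤ b ⊔ c := hab.trans le_sup_left
          have hbc' : δ c' (b ⊔ c') := by
            rcases eq_or_lt_of_le hac' with rfl | hlt'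
            · rw [sup_eq_left.mpr hab]; exact hδ
            · apply IHk a b c' hab hδ hac'
              · exact le_trans (len_mono hfin habc le_rfl (sup_le_sup_left hc'c.le _)) hlen
              · have h3 : len a c' < len a c := len_strict_top hfin hc'c.lt hac'
                omega
          have heq : (b ⊔ c') ⊔ c = b ⊔ c := by
            rw [sup_assoc, sup_eq_right.mpr hc'c.le]
          have hres := hA c' (b ⊔ c') c hc'c le_sup_right hbc'
            (by rw [heq]; exact le_trans (len_mono hfin habc hac' le_rfl) hlen)
          rwa [heq] at hres
    exact ⟨hA, fun a b c h1 h2 h3 h4 => hB (len a c) a b c h1 h2 h3 h4 le_rfl⟩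
  intro a b c h
  have h1 : δ (a ⊓ b) (a ⊔ b) := inf_sup_rel hequiv hint h
  have h2 := (key (len (a ⊓ b) ((a ⊔ b) ⊔ (a ⊓ b ⊔ c)))).2 (a ⊓ b) (a ⊔ b) (a ⊓ b ⊔ c)
    (inf_le_left.trans le_sup_left) h1 le_sup_left le_rfl
  have heq : (a ⊔ b) ⊔ (a ⊓ b ⊔ c) = (a ⊔ b) ⊔ c := by
    rw [← sup_assoc,
      sup_eq_left.mpr (show a ⊓ b ≤ a ⊔ b from inf_le_left.trans le_sup_left)]
  rw [heq] at h2
  have ha : δ (a ⊓ b ⊔ c) (a ⊔ c) :=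
    convex hequiv hint h2 (sup_le_sup_right inf_le_left c)
      (sup_le_sup_right le_sup_left c)
  have hb : δ (a ⊓ b ⊔ c) (b ⊔ c) :=
    convex hequiv hint h2 (sup_le_sup_right inf_le_right c)
      (sup_le_sup_right le_sup_right c)
  exact hequiv.trans (hequiv.symm ha) hb

end Stmt6Aux

theorem stmt6 {L : Type*} [Lattice L]
    (hfin : ∀ a b : L, a ≤ b → ∃ n : ℕ, ∀ (m : ℕ) (f : Fin m → L),
      StrictMono f → (∀ i, f i ∈ Set.Icc a b) → m ≤ n + 1)
    (δ : L → L → Prop) (hequiv : Equivalence δ) (hint : ClassesAreIntervals δ) :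
    IsLatCong δ ↔ (CondJoin δ ∧ CondMeet δ) := by
  constructor
  · rintro ⟨-, hcomp⟩
    constructor
    · intro x y z hxy hxz hδ
      have h := (hcomp x y z z hδ (hequiv.refl z)).2
      rwa [sup_eq_right.mpr hxz.le] at h
    · intro x y z hyx hzx hδ
      have h := (hcomp x y z z hδ (hequiv.refl z)).1
      rwa [inf_eq_right.mpr hzx.le] at h
  · rintro ⟨hJ, hM⟩
    have hjoin : ∀ a b c : L, δ a b → δ (a ⊔ c) (b ⊔ c) :=
      Stmt6Aux.joinSide hfin hequiv hint hJ
    -- dualize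
    let δ' : Lᵒᵈ → Lᵒᵈ → Prop := fun x y => δ (OrderDual.ofDual x) (OrderDual.ofDual y)
    have hfin' : Stmt6Aux.FinLen Lᵒᵈ := by
      intro a b hab
      obtain ⟨n, hn⟩ := hfin (OrderDual.ofDual b) (OrderDual.ofDual a) hab
      refine ⟨n, fun m f hf hi => ?_⟩
      refine hn m (fun i => OrderDual.ofDual (f i.rev)) ?_ ?_
      · intro i j hij
        exact hf (Fin.rev_lt_rev.mpr hij)
      · intro i
        exact ⟨(hi i.rev).2, (hi i.rev).1⟩
    have hequiv' : Equivalence δ' :=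
      ⟨fun x => hequiv.refl _, fun h => hequiv.symm h, fun h1 h2 => hequiv.trans h1 h2⟩
    have hint' : ∀ a : Lᵒᵈ, ∃ u v : Lᵒᵈ, {x : Lᵒᵈ | δ' x a} = Set.Icc u v := by
      intro a
      obtain ⟨u, v, hs⟩ := hint (OrderDual.ofDual a)
      refine ⟨OrderDual.toDual v, OrderDual.toDual u, ?_⟩
      ext x
      rw [Set.ext_iff] at hs
      have h := hs (OrderDual.ofDual x)
      simp only [Set.mem_setOf_eq, Set.mem_Icc] at h ⊢
      exact h.trans ⟨fun ⟨p, q⟩ => ⟨q, p⟩, fun ⟨p, q⟩ => ⟨q, p⟩⟩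
    have hJ' : ∀ x y z : Lᵒᵈ, x ⋖ y → x ⋖ z → δ' x y → δ' z (y ⊔ z) := by
      intro x y z h1 h2 h3
      exact hM (OrderDual.ofDual x) (OrderDual.ofDual y) (OrderDual.ofDual z)
        (toDual_covBy_toDual_iff.mp h1) (toDual_covBy_toDual_iff.mp h2) h3
    have hmeet' := Stmt6Aux.joinSide hfin' hequiv' hint' hJ'
    have hmeet : ∀ a b c : L, δ a b → δ (a ⊓ c) (b ⊓ c) := fun a b c h =>
      hmeet' (OrderDual.toDual a) (OrderDual.toDual b) (OrderDual.toDual c) h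
    refine ⟨hequiv, fun a b c d h1 h2 => ⟨?_, ?_⟩⟩
    · have m1 : δ (a ⊓ c) (b ⊓ c) := hmeet a b c h1
      have m2 : δ (c ⊓ b) (d ⊓ b) := hmeet c d b h2
      rw [inf_comm c b, inf_comm d b] at m2
      exact hequiv.trans m1 m2
    · have m1 : δ (a ⊔ c) (b ⊔ c) := hjoin a b c h1
      have m2 : δ (c ⊔ b) (d ⊔ b) := hjoin c d b h2
      rw [sup_comm c b, sup_comm d b] at m2
      exact hequiv.trans m1 m2
end

section
/- A reflexive binary relation α on a lattice L satisfying: (i) x ≡ y (mod α) iff x ∧ y ≡ x ∨ y (mod α); (ii) transitivity on chains x ≤ y ≤ z; (iii) for x ≤ y with x ≡ y (mod α), x ∨ t ≡ y ∨ t (mod α) and x ∧ t ≡ y ∧ t (mod α) for all t — is symmetric and transitive, hence an equivalence relation. -/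
theorem stmt7 {L : Type*} [Lattice L] (α : L → L → Prop)
    (hrefl : ∀ x : L, α x x)
    (h1 : ∀ x y : L, α x y ↔ α (x ⊓ y) (x ⊔ y))
    (h2 : ∀ x y z : L, x ≤ y → y ≤ z → α x y → α y z → α x z)
    (h3 : ∀ x y t : L, x ≤ y → α x y → α (x ⊔ t) (y ⊔ t) ∧ α (x ⊓ t) (y ⊓ t)) :
    Equivalence α := by
  -- restriction of a congruence interval to a subinterval
  have hsub : ∀ m M u v : L, α m M → m ≤ u → u ≤ v → v ≤ M → α u v := by
    intro m M u v hmM hmu huv hvM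
    have h1' : α u M := by
      have := (h3 m M u (le_trans hmu (le_trans huv hvM)) hmM).1
      rwa [sup_eq_right.mpr hmu, sup_eq_left.mpr (le_trans huv hvM)] at this
    have h2' : α u v := by
      have := (h3 u M v (le_trans huv hvM) h1').2
      rwa [inf_eq_left.mpr huv, inf_eq_right.mpr hvM] at this
    exact h2'
  refine ⟨hrefl, ?_, ?_⟩
  · intro x y hxy
    rw [h1] at hxy ⊢
    rwa [inf_comm, sup_comm]
  · intro x y z hxy hyz
    set a := x ⊓ y
    set b := x ⊔ y
    set c := y ⊓ z
    set d := y ⊔ z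
    have hab : α a b := (h1 x y).mp hxy
    have hcd : α c d := (h1 y z).mp hyz
    have hab' : a ≤ b := le_trans inf_le_left le_sup_left
    have hcd' : c ≤ d := le_trans inf_le_left le_sup_left
    -- α (a ⊔ c) (b ⊔ d)
    have s1 : α (a ⊔ c) (b ⊔ c) := (h3 a b c hab' hab).1
    have s2 : α (b ⊔ c) (b ⊔ d) := by
      have := (h3 c d b hcd' hcd).1
      rwa [sup_comm c b, sup_comm d b] at this
    have hsup : α (a ⊔ c) (b ⊔ d) :=
      h2 _ _ _ (sup_le_sup_right hab' c) (sup_le_sup_left hcd' b) s1 s2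
    -- α (a ⊓ c) (b ⊓ d)
    have m1 : α (a ⊓ c) (b ⊓ c) := (h3 a b c hab' hab).2
    have m2 : α (b ⊓ c) (b ⊓ d) := by
      have := (h3 c d b hcd' hcd).2
      rwa [inf_comm c b, inf_comm d b] at this
    have hinf : α (a ⊓ c) (b ⊓ d) :=
      h2 _ _ _ (inf_le_inf_right c hab') (inf_le_inf_left b hcd') m1 m2
    -- key inequality: a ⊔ c ≤ y ≤ b ⊓ d
    have hay : a ≤ y := inf_le_right
    have hcy : c ≤ y := inf_le_left
    have hyb : y ≤ b := le_sup_right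
    have hyd : y ≤ d := le_sup_left
    have hmid : a ⊔ c ≤ b ⊓ d := le_trans (sup_le hay hcy) (le_inf hyb hyd)
    -- α (b ⊓ d) (b ⊔ d)
    have hbd : α (b ⊓ d) (b ⊔ d) := by
      have := (h3 (a ⊔ c) (b ⊔ d) (b ⊓ d)
        (le_trans hmid (le_trans inf_le_left le_sup_left)) hsup).1
      rwa [sup_eq_right.mpr hmid,
        sup_eq_left.mpr (le_trans inf_le_left le_sup_left)] at this
    -- α (a ⊓ c) (b ⊔ d)
    have hbig : α (a ⊓ c) (b ⊔ d) :=
      h2 _ _ _ (inf_le_inf hab' hcd') (le_trans inf_le_left le_sup_left) hinf hbd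
    -- now x ⊓ z and x ⊔ z lie in [a ⊓ c, b ⊔ d]
    have hxz : α (x ⊓ z) (x ⊔ z) := by
      apply hsub (a ⊓ c) (b ⊔ d) _ _ hbig
      · exact le_inf (le_trans inf_le_left inf_le_left)
          (le_trans inf_le_right inf_le_right)
      · exact le_trans inf_le_left le_sup_left
      · exact sup_le (le_trans le_sup_left le_sup_left)
          (le_trans le_sup_right le_sup_right)
    exact (h1 x z).mpr hxz
end

section
/- Let L be a finite semimodular lattice and δ an equivalence relation on L whose classes are intervals. Suppose for every covering square {x, y, z, y ∨ z} (where x ⋖ y, x ⋖ z, y ⋖ y ∨ z, z ⋖ y ∨ z) with x ≡ y (mod δ), we have z ≡ y ∨ z (mod δ), and the dual condition (C∧) holds. Then δ is a congruence relation. -/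
section Aux

variable {L : Type*} [Lattice L] {δ : L → L → Prop}

/-- Convexity of classes: if `δ p q` and `p ≤ r ≤ q` then `δ r q`. -/
lemma aux_conv (hequiv : Equivalence δ) (hint : ClassesAreIntervals δ)
    {p q r : L} (h : δ p q) (h1 : p ≤ r) (h2 : r ≤ q) : δ r q := by
  obtain ⟨u, v, huv⟩ := hint q
  have hp : p ∈ Set.Icc u v := by rw [← huv]; exact h
  have hq : q ∈ Set.Icc u v := by rw [← huv]; exact hequiv.refl q
  have : r ∈ {x : L | δ x q} := by
    rw [huv]; exact ⟨le_trans hp.1 h1, le_trans h2 hq.2⟩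
  exact this

/-- Classes are closed under join. -/
lemma aux_sup (hequiv : Equivalence δ) (hint : ClassesAreIntervals δ)
    {p q : L} (h : δ p q) : δ (p ⊔ q) q := by
  obtain ⟨u, v, huv⟩ := hint q
  have hp : p ∈ Set.Icc u v := by rw [← huv]; exact h
  have hq : q ∈ Set.Icc u v := by rw [← huv]; exact hequiv.refl q
  have : p ⊔ q ∈ {x : L | δ x q} := by
    rw [huv]; exact ⟨le_trans hp.1 le_sup_left, sup_le hp.2 hq.2⟩
  exact this

/-- Classes are closed under meet. -/
lemma aux_inf (hequiv : Equivalence δ) (hint : ClassesAreIntervals δ)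
    {p q : L} (h : δ p q) : δ (p ⊓ q) q := by
  obtain ⟨u, v, huv⟩ := hint q
  have hp : p ∈ Set.Icc u v := by rw [← huv]; exact h
  have hq : q ∈ Set.Icc u v := by rw [← huv]; exact hequiv.refl q
  have : p ⊓ q ∈ {x : L | δ x q} := by
    rw [huv]; exact ⟨le_inf hp.1 hq.1, le_trans inf_le_right hq.2⟩
  exact this

variable [Fintype L]

/-- Downward substitution lemma: from `δ x m` with `m ≤ x`, deduce `δ d (m ⊓ d)`
for all `d ≤ x`.  Proven by well-founded induction on `x`, using `CondMeet`. -/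
lemma aux_meet (hequiv : Equivalence δ) (hint : ClassesAreIntervals δ)
    (hdual : CondMeet δ) :
    ∀ x m d : L, m ≤ x → δ x m → d ≤ x → δ d (m ⊓ d) := by
  intro x
  induction x using WellFoundedLT.induction with
  | ind x IH =>
    intro m d hmx hxm hdx
    rcases eq_or_lt_of_le hdx with rfl | hdx'
    · exact hequiv.symm (aux_inf hequiv hint (hequiv.symm hxm))
    · -- pick z with d ≤ z ⋖ x
      obtain ⟨z, hdz, hzx⟩ := exists_le_covBy_of_lt hdx'
      rcases eq_or_lt_of_le hmx with rfl | hmx'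
      · -- trivial case m = x : then m ⊓ d = d
        have h : m ⊓ d = d := inf_eq_right.mpr hdx
        rw [h]; exact hequiv.refl d
      · -- pick y with m ≤ y ⋖ x
        obtain ⟨y, hmy, hyx⟩ := exists_le_covBy_of_lt hmx'
        have hyx' : δ y x := aux_conv hequiv hint (hequiv.symm hxm) hmy hyx.le
        have hxy : δ x y := hequiv.symm hyx'
        -- δ z (y ⊓ z)
        have hz1 : δ z (y ⊓ z) := by
          rcases eq_or_ne z y with rfl | hne
          · rw [inf_idem]; exact hequiv.refl z
          · exact hdual x y z hyx hzx hxy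
        -- δ (y ⊓ z) (m ⊓ z) via IH at y
        have hmy' : δ y m := hequiv.trans hyx' hxm
        have hz2 : δ (y ⊓ z) (m ⊓ (y ⊓ z)) :=
          IH y hyx.lt m (y ⊓ z) hmy hmy' inf_le_left
        have hmz : m ⊓ (y ⊓ z) = m ⊓ z := by
          rw [← inf_assoc, inf_eq_left.mpr hmy]
        rw [hmz] at hz2
        have hz3 : δ z (m ⊓ z) := hequiv.trans hz1 hz2
        -- conclude by IH at z
        have hfin : δ d ((m ⊓ z) ⊓ d) :=
          IH z hzx.lt (m ⊓ z) d inf_le_right hz3 hdz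
        have h : (m ⊓ z) ⊓ d = m ⊓ d := by
          rw [inf_assoc, inf_eq_right.mpr hdz]
        rwa [h] at hfin

/-- Upward substitution lemma: from `δ x m` with `x ≤ m`, deduce `δ d (m ⊔ d)`
for all `d ≥ x`.  Proven by well-founded induction (dual order), using `CondJoin`. -/
lemma aux_join (hequiv : Equivalence δ) (hint : ClassesAreIntervals δ)
    (hcj : CondJoin δ) :
    ∀ x m d : L, x ≤ m → δ x m → x ≤ d → δ d (m ⊔ d) := by
  intro x
  induction x using WellFoundedGT.induction with
  | ind x IH =>
    intro m d hxm hxm' hxd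
    rcases eq_or_lt_of_le hxd with rfl | hxd'
    · exact hequiv.symm (aux_sup hequiv hint (hequiv.symm hxm'))
    · obtain ⟨z, hxz, hzd⟩ := exists_covBy_le_of_lt hxd'
      rcases eq_or_lt_of_le hxm with rfl | hxm''
      · have h : x ⊔ d = d := sup_eq_right.mpr hxd
        rw [h]; exact hequiv.refl d
      · obtain ⟨y, hxy, hym⟩ := exists_covBy_le_of_lt hxm''
        have hmy' : δ y m := aux_conv hequiv hint hxm' hxy.le hym
        have hxy' : δ x y := hequiv.trans hxm' (hequiv.symm hmy')
        have hz1 : δ z (y ⊔ z) := by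
          rcases eq_or_ne z y with rfl | hne
          · rw [sup_idem]; exact hequiv.refl z
          · exact hcj x y z hxy hxz hxy'
        have hz2 : δ (y ⊔ z) (m ⊔ (y ⊔ z)) :=
          IH y hxy.lt m (y ⊔ z) hym hmy' le_sup_left
        have hmz : m ⊔ (y ⊔ z) = m ⊔ z := by
          rw [← sup_assoc, sup_eq_left.mpr hym]
        rw [hmz] at hz2
        have hz3 : δ z (m ⊔ z) := hequiv.trans hz1 hz2
        have hfin : δ d ((m ⊔ z) ⊔ d) :=
          IH z hxz.lt (m ⊔ z) d le_sup_right hz3 hzd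
        have h : (m ⊔ z) ⊔ d = m ⊔ d := by
          rw [sup_assoc, sup_eq_right.mpr hzd]
        rwa [h] at hfin

end Aux

theorem stmt9 {L : Type*} [Lattice L] [Fintype L]
    (hsm : ∀ x y z : L, x ⋖ y → x ⋖ z → y ≠ z → y ⋖ y ⊔ z ∧ z ⋖ y ⊔ z)
    (δ : L → L → Prop) (hequiv : Equivalence δ) (hint : ClassesAreIntervals δ)
    (hsq : ∀ x y z : L, x ⋖ y → x ⋖ z → y ⋖ y ⊔ z → z ⋖ y ⊔ z →
      δ x y → δ z (y ⊔ z))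
    (hdual : CondMeet δ) :
    IsLatCong δ := by
  have hcj : CondJoin δ := by
    intro x y z hxy hxz h
    rcases eq_or_ne y z with rfl | hne
    · rw [sup_idem]; exact hequiv.refl y
    · obtain ⟨h1, h2⟩ := hsm x y z hxy hxz hne
      exact hsq x y z hxy hxz h1 h2 h
  -- single-sided substitution properties
  have meet_subst : ∀ a b c : L, δ a b → δ (a ⊓ c) (b ⊓ c) := by
    intro a b c hab
    have hab1 : δ (a ⊓ b) b := aux_inf hequiv hint hab
    have hab2 : δ a (a ⊓ b) :=
      hequiv.trans hab (hequiv.symm hab1)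
    have hA : δ (a ⊓ c) ((a ⊓ b) ⊓ (a ⊓ c)) :=
      aux_meet hequiv hint hdual a (a ⊓ b) (a ⊓ c) inf_le_left
        hab2 inf_le_left
    have hB : δ (b ⊓ c) ((a ⊓ b) ⊓ (b ⊓ c)) :=
      aux_meet hequiv hint hdual b (a ⊓ b) (b ⊓ c) inf_le_right
        (hequiv.symm hab1) inf_le_left
    have e1 : (a ⊓ b) ⊓ (a ⊓ c) = (a ⊓ b) ⊓ c := by
      simp [inf_assoc, inf_comm, inf_left_comm]
    have e2 : (a ⊓ b) ⊓ (b ⊓ c) = (a ⊓ b) ⊓ c := by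
      simp [inf_assoc, inf_comm, inf_left_comm]
    rw [e1] at hA; rw [e2] at hB
    exact hequiv.trans hA (hequiv.symm hB)
  have join_subst : ∀ a b c : L, δ a b → δ (a ⊔ c) (b ⊔ c) := by
    intro a b c hab
    have hab1 : δ (a ⊔ b) b := aux_sup hequiv hint hab
    have hab2 : δ a (a ⊔ b) :=
      hequiv.trans hab (hequiv.symm hab1)
    have hA : δ (a ⊔ c) ((a ⊔ b) ⊔ (a ⊔ c)) :=
      aux_join hequiv hint hcj a (a ⊔ b) (a ⊔ c) le_sup_left hab2 le_sup_left
    have hB : δ (b ⊔ c) ((a ⊔ b) ⊔ (b ⊔ c)) :=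
      aux_join hequiv hint hcj b (a ⊔ b) (b ⊔ c) le_sup_right
        (hequiv.symm hab1) le_sup_left
    have e1 : (a ⊔ b) ⊔ (a ⊔ c) = (a ⊔ b) ⊔ c := by
      simp [sup_assoc, sup_comm, sup_left_comm]
    have e2 : (a ⊔ b) ⊔ (b ⊔ c) = (a ⊔ b) ⊔ c := by
      simp [sup_assoc, sup_comm, sup_left_comm]
    rw [e1] at hA; rw [e2] at hB
    exact hequiv.trans hA (hequiv.symm hB)
  refine ⟨hequiv, fun a b c d hab hcd => ?_⟩
  constructor
  · have h1 : δ (a ⊓ c) (b ⊓ c) := meet_subst a b c hab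
    have h2 : δ (c ⊓ b) (d ⊓ b) := meet_subst c d b hcd
    rw [inf_comm c b, inf_comm d b] at h2
    exact hequiv.trans h1 h2
  · have h1 : δ (a ⊔ c) (b ⊔ c) := join_subst a b c hab
    have h2 : δ (c ⊔ b) (d ⊔ b) := join_subst c d b hcd
    rw [sup_comm c b, sup_comm d b] at h2
    exact hequiv.trans h1 h2
end
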